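/- arXiv:2206.03831 — 2 statements merged into one kernel-verified Lean document; each statement's English description precedes it below -/
import Mathlib

section
/- Let z*(N) > 0 be the unique positive solution of z² = N((z+1)ln(z+1) − z) and a_N = (z*(N) + N)²/((z*(N) + 1)·N). Then a_N / ln N → 1 as N → ∞. -/
/-!
With Bennett's function `h(x) = (x + 1) log (x + 1) - x`, the defining equation says
`N = z² / h(z)`. The bound `x² ≤ 2 (x + 2) h(x)` gives `N ≤ 2 (z + 2)`, so `z → ∞`; and since
`h(x) ~ x log x`, we get `N ~ z / log z`, hence `N = o(z)` and `log N ~ log z`. The quotient is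
then asymptotic to `z² / ((z · z / log z) · log z) = 1`.
-/

open Filter Asymptotics Real

noncomputable section

def bennett (x : ℝ) : ℝ := (x + 1) * log (x + 1) - x

def bennettRatio (x : ℝ) : ℝ := x ^ 2 / bennett x

lemma sq_le_two_mul_add_two_mul_bennett {x : ℝ} (hx : 0 ≤ x) :
    x ^ 2 ≤ 2 * (x + 2) * bennett x := by
  have hlog : 2 * x / (x + 2) ≤ log (x + 1) := by
    simpa [add_comm] using le_log_one_add_of_nonneg hx
  rw [div_le_iff₀ (by linarith)] at hlog
  unfold bennett
  nlinarith [mul_le_mul_of_nonneg_left hlog (by linarith : (0 : ℝ) ≤ 2 * (x + 1))]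

lemma bennett_pos {x : ℝ} (hx : 0 < x) : 0 < bennett x :=
  pos_of_mul_pos_right ((pow_pos hx 2).trans_le (sq_le_two_mul_add_two_mul_bennett hx.le))
    (by linarith)

lemma bennettRatio_le_two_mul_add_two {x : ℝ} (hx : 0 < x) : bennettRatio x ≤ 2 * (x + 2) :=
  div_le_of_le_mul₀ (bennett_pos hx).le (by linarith) (sq_le_two_mul_add_two_mul_bennett hx.le)

lemma tendsto_div_log_atTop : Tendsto (fun x => x / log x) atTop atTop := by
  refine ((tendsto_exp_div_pow_atTop 1).comp tendsto_log_atTop).congr' ?_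
  filter_upwards [eventually_gt_atTop 0] with x hx
  simp [exp_log hx]

lemma add_one_isEquivalent : (fun x : ℝ => x + 1) ~[atTop] fun x => x :=
  IsEquivalent.refl.add_const_of_norm_tendsto_atTop tendsto_norm_atTop_atTop

lemma bennett_isEquivalent : bennett ~[atTop] fun x => x * log x := by
  have hmul : (fun x => (x + 1) * log (x + 1)) ~[atTop] fun x => x * log x :=
    add_one_isEquivalent.mul (add_one_isEquivalent.log tendsto_id)
  have hsmall : (fun x : ℝ => x) =o[atTop] fun x => x * log x := by
    simpa using (isBigO_refl (fun x : ℝ => x) atTop).mul_isLittleO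
      (isLittleO_const_log_atTop (c := 1))
  exact hmul.sub_isLittleO hsmall

lemma bennettRatio_isEquivalent : bennettRatio ~[atTop] fun x => x / log x := by
  refine (IsEquivalent.refl.div bennett_isEquivalent).congr_right ?_
  filter_upwards [eventually_gt_atTop 0] with x hx
  simp only [Pi.div_apply]
  field_simp

lemma bennettRatio_isLittleO : bennettRatio =o[atTop] fun x => x := by
  refine bennettRatio_isEquivalent.trans_isLittleO ?_
  simpa [div_eq_mul_inv] using (isBigO_refl (fun x : ℝ => x) atTop).mul_isLittleO
    ((isLittleO_one_iff ℝ).2 (tendsto_inv_atTop_zero.comp tendsto_log_atTop))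

lemma log_bennettRatio_isEquivalent : (fun x => log (bennettRatio x)) ~[atTop] log := by
  refine (bennettRatio_isEquivalent.log tendsto_div_log_atTop).trans ?_
  have hsmall : (fun x => log (log x)) =o[atTop] log :=
    isLittleO_log_id_atTop.comp_tendsto tendsto_log_atTop
  refine (IsEquivalent.refl.sub_isLittleO hsmall).congr_left ?_
  filter_upwards [eventually_gt_atTop 1] with x hx
  simp only [Pi.sub_apply]
  rw [log_div (by positivity) (log_pos hx).ne']

lemma tendsto_bennettRatio_quotient :
    Tendsto (fun x => (x + bennettRatio x) ^ 2 / ((x + 1) * bennettRatio x) / log (bennettRatio x))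
      atTop (nhds 1) := by
  have hnum : (fun x => (x + bennettRatio x) ^ 2) ~[atTop] fun x => x ^ 2 :=
    (IsEquivalent.refl.add_isLittleO bennettRatio_isLittleO).pow 2
  have h := (hnum.div (add_one_isEquivalent.mul bennettRatio_isEquivalent)).div
    log_bennettRatio_isEquivalent
  refine h.tendsto_nhds_iff.2 (tendsto_const_nhds.congr' ?_)
  filter_upwards [eventually_gt_atTop 1] with x hx
  have := (log_pos hx).ne'
  simp only [Pi.div_apply, Pi.mul_apply]
  field_simp

end

theorem harmonic_mean_scaling_factor_tendsto (z : ℕ → ℝ)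
    (hz : ∀ N : ℕ, 2 ≤ N → 0 < z N ∧
      z N ^ 2 = N * ((z N + 1) * Real.log (z N + 1) - z N)) :
    Tendsto (fun N : ℕ => (z N + N) ^ 2 / ((z N + 1) * N) / Real.log N)
      atTop (nhds 1) := by
  have hratio : ∀ N : ℕ, 2 ≤ N → bennettRatio (z N) = N := fun N hN => by
    obtain ⟨hpos, heq⟩ := hz N hN
    rw [bennettRatio, div_eq_iff (bennett_pos hpos).ne', bennett, heq]
  have hz_atTop : Tendsto z atTop atTop := by
    refine tendsto_atTop_mono' _ ?_ (tendsto_atTop_add_const_right _ (-2)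
      (tendsto_natCast_atTop_atTop.atTop_div_const (two_pos : (0 : ℝ) < 2)))
    filter_upwards [eventually_ge_atTop 2] with N hN
    have := hratio N hN ▸ bennettRatio_le_two_mul_add_two (hz N hN).1
    linarith
  refine (tendsto_bennettRatio_quotient.comp hz_atTop).congr' ?_
  filter_upwards [eventually_ge_atTop 2] with N hN
  simp only [Function.comp_apply, hratio N hN]
end

section
/- Let Σ₁, Σ₂ be symmetric positive-definite K×K matrices and suppose Σ₁ = B Bᵀ = C Cᵀ and Σ₂ = B Λ Bᵀ = C Λ' Cᵀ, where B, C are invertible and Λ, Λ' are diagonal with positive entries. If the diagonal entries of Λ are pairwise distinct and arranged in the same (say, strictly decreasing) order as those of Λ', then Λ = Λ' and C = B D for some diagonal matrix D with diagonal entries in {−1, +1}. -/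
/-!
Write `C = B M` with `M = B⁻¹ C`. From `B Bᵀ = C Cᵀ`, the matrix `M` is orthogonal, and then
`B Λ Bᵀ = C Λ' Cᵀ` becomes `Λ M = M Λ'`. Entrywise, `λᵢ Mᵢⱼ = Mᵢⱼ λ'ⱼ`, so `λᵢ = λ'ⱼ` whenever
`Mᵢⱼ ≠ 0`; as `M` has no zero row or column, `Λ` and `Λ'` have the same set of eigenvalues, and the
common ordering forces `Λ = Λ'`. Since the `λᵢ` are distinct, `M` is then diagonal, and an orthogonal
diagonal matrix has entries `±1`.
-/

open Matrix

theorem StrictAnti.eq_of_range_eq {ι α : Type*} [LinearOrder ι] [Finite ι] [Preorder α]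
    {l l' : ι → α} (hl : StrictAnti l) (hl' : Antitone l') (h : Set.range l = Set.range l') :
    l = l' := by
  have hsub : ∀ j, ∃ i, l i = l' j := fun j => by
    rw [← Set.mem_range, h]
    exact Set.mem_range_self j
  choose σ hσ using hsub
  have hsurj : Function.Surjective σ := by
    intro i
    obtain ⟨j, hj⟩ : l i ∈ Set.range l' := h ▸ Set.mem_range_self i
    exact ⟨j, hl.injective ((hσ j).trans hj)⟩
  have hmono : StrictMono σ := by
    refine Monotone.strictMono_of_injective (fun a b hab => ?_)
      (Finite.injective_iff_surjective.mpr hsurj)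
    rw [← hl.le_iff_ge, hσ, hσ]
    exact hl' hab
  have : WellFoundedLT ι := Finite.to_wellFoundedLT
  have hσid : σ = id :=
    (hmono.range_inj strictMono_id).1 (by rw [Set.range_id, hsurj.range_eq])
  funext j
  rw [← hσ j, hσid, id]

namespace Matrix

variable {n R : Type*} [Fintype n] [DecidableEq n] [CommRing R]

theorem inv_mul_mem_orthogonalGroup {B C : Matrix n n R} (hB : IsUnit B)
    (h : B * Bᵀ = C * Cᵀ) : B⁻¹ * C ∈ orthogonalGroup n R := by
  have hBd : IsUnit B.det := (isUnit_iff_isUnit_det B).mp hB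
  rw [mem_orthogonalGroup_iff, transpose_mul, transpose_nonsing_inv, Matrix.mul_assoc,
    ← Matrix.mul_assoc C, ← h, Matrix.mul_assoc,
    mul_nonsing_inv _ (by rwa [det_transpose]), Matrix.mul_one, nonsing_inv_mul _ hBd]

theorem mul_eq_mul_of_mul_mul_transpose_eq {A A' B M : Matrix n n R} (hB : IsUnit B)
    (hM : Mᵀ * M = 1) (h : B * A * Bᵀ = B * M * A' * (B * M)ᵀ) : A * M = M * A' := by
  have hA : A = M * A' * Mᵀ := by
    refine hB.mul_left_cancel (((isUnit_transpose B).mpr hB).mul_right_cancel ?_)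
    rw [h, transpose_mul]
    simp only [Matrix.mul_assoc]
  rw [hA, Matrix.mul_assoc, Matrix.mul_assoc, hM, Matrix.mul_one]

theorem diagonal_mem_orthogonalGroup_iff {d : n → R} :
    diagonal d ∈ orthogonalGroup n R ↔ ∀ k, d k * d k = 1 := by
  rw [mem_orthogonalGroup_iff, diagonal_transpose, diagonal_mul_diagonal, ← diagonal_one,
    diagonal_eq_diagonal_iff]

variable [NoZeroDivisors R]

theorem apply_eq_of_diagonal_mul_eq_mul_diagonal {M : Matrix n n R} {l l' : n → R}
    (h : diagonal l * M = M * diagonal l') {i j : n} (hij : M i j ≠ 0) : l i = l' j := by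
  have hij' := congrFun (congrFun h i) j
  rw [diagonal_mul, mul_diagonal, mul_comm] at hij'
  exact mul_left_cancel₀ hij hij'

theorem range_eq_of_diagonal_mul_eq_mul_diagonal {M : Matrix n n R} (hM : M.det ≠ 0)
    {l l' : n → R} (h : diagonal l * M = M * diagonal l') : Set.range l = Set.range l' := by
  ext x
  constructor
  · rintro ⟨i, rfl⟩
    obtain ⟨j, hj⟩ : ∃ j, M i j ≠ 0 := by
      by_contra! hrow
      exact hM (det_eq_zero_of_row_eq_zero i hrow)
    exact ⟨j, (apply_eq_of_diagonal_mul_eq_mul_diagonal h hj).symm⟩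
  · rintro ⟨j, rfl⟩
    obtain ⟨i, hi⟩ : ∃ i, M i j ≠ 0 := by
      by_contra! hcol
      exact hM (det_eq_zero_of_column_eq_zero j hcol)
    exact ⟨i, apply_eq_of_diagonal_mul_eq_mul_diagonal h hi⟩

theorem eq_diagonal_diag_of_commute_diagonal {M : Matrix n n R} {l : n → R}
    (hl : Function.Injective l) (h : Commute (diagonal l) M) : M = diagonal M.diag := by
  ext i j
  by_cases hij : i = j
  · subst hij
    simp
  · rw [diagonal_apply_ne _ hij]
    by_contra hM
    exact hij (hl (apply_eq_of_diagonal_mul_eq_mul_diagonal h.eq hM))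

end Matrix

theorem B_unique_up_to_column_signs_general
    {K : ℕ} (B C S₁ S₂ : Matrix (Fin K) (Fin K) ℝ) (l l' : Fin K → ℝ)
    (hB : IsUnit B)
    (hldec : StrictAnti l) (hl'dec : Antitone l')
    (hS₁B : S₁ = B * Bᵀ) (hS₁C : S₁ = C * Cᵀ)
    (hS₂B : S₂ = B * Matrix.diagonal l * Bᵀ)
    (hS₂C : S₂ = C * Matrix.diagonal l' * Cᵀ) :
    l = l' ∧ ∃ d : Fin K → ℝ, (∀ k, d k = 1 ∨ d k = -1) ∧
      C = B * Matrix.diagonal d := by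
  set M := B⁻¹ * C
  have hBM : B * M = C :=
    mul_nonsing_inv_cancel_left (A := B) C ((isUnit_iff_isUnit_det B).mp hB)
  have hM : M ∈ orthogonalGroup (Fin K) ℝ := inv_mul_mem_orthogonalGroup hB (hS₁B ▸ hS₁C)
  have hcomm : diagonal l * M = M * diagonal l' :=
    mul_eq_mul_of_mul_mul_transpose_eq hB ((mem_orthogonalGroup_iff' (Fin K) ℝ).mp hM)
      (by rw [hBM, ← hS₂B, ← hS₂C])
  have hMdet : M.det ≠ 0 :=
    det_ne_zero_of_right_inverse ((mem_orthogonalGroup_iff (Fin K) ℝ).mp hM)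
  obtain rfl : l = l' :=
    hldec.eq_of_range_eq hl'dec (range_eq_of_diagonal_mul_eq_mul_diagonal hMdet hcomm)
  have hMdiag : M = diagonal M.diag := eq_diagonal_diag_of_commute_diagonal hldec.injective hcomm
  have hsigns := diagonal_mem_orthogonalGroup_iff.mp (hMdiag ▸ hM)
  exact ⟨rfl, M.diag, fun k => mul_self_eq_one_iff.mp (hsigns k), by rw [← hMdiag, hBM]⟩

theorem B_unique_up_to_column_signs
    {K : ℕ} (B C S₁ S₂ : Matrix (Fin K) (Fin K) ℝ) (l l' : Fin K → ℝ)
    (hB : IsUnit B) (hC : IsUnit C)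
    (hlpos : ∀ k, 0 < l k) (hl'pos : ∀ k, 0 < l' k)
    (hldec : StrictAnti l) (hl'dec : Antitone l')
    (hS₁B : S₁ = B * Bᵀ) (hS₁C : S₁ = C * Cᵀ)
    (hS₂B : S₂ = B * Matrix.diagonal l * Bᵀ)
    (hS₂C : S₂ = C * Matrix.diagonal l' * Cᵀ) :
    l = l' ∧ ∃ d : Fin K → ℝ, (∀ k, d k = 1 ∨ d k = -1) ∧
      C = B * Matrix.diagonal d :=
  B_unique_up_to_column_signs_general B C S₁ S₂ l l' hB hldec hl'dec hS₁B hS₁C hS₂B hS₂C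
end
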